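/- Assume ξ_i ≥ 0, ξ_j ≥ 0, ξ_k ≥ 0. For all positive reals r_i, r_j, r_k, the hyperbolic inner angles satisfy 0 < ϑ_i < π − Θ_i, 0 < ϑ_j < π − Θ_j, 0 < ϑ_k < π − Θ_k, and ϑ_i + ϑ_j + ϑ_k < π. -/

import Mathlib

/-- `hypCosh I rj rk` is the hyperbolic cosine of the side length `l_i` of
the hyperbolic three-circle configuration:
`cosh l_i = cosh r_j · cosh r_k + I_i · sinh r_j · sinh r_k`. -/
noncomputable def hypCosh (I rj rk : ℝ) : ℝ :=
  Real.cosh rj * Real.cosh rk + I * Real.sinh rj * Real.sinh rk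

/-- The hyperbolic inner angle `ϑ_i` at the center of the circle of radius `r_i`
in the hyperbolic three-circle configuration with radii `r_i, r_j, r_k` and
cosines of exterior intersection angles `I_i, I_j, I_k`:
`ϑ_i = arccos((cosh l_j · cosh l_k − cosh l_i)/(sinh l_j · sinh l_k))`,
where `sinh l = √(cosh² l − 1)` since `l > 0`.  The angles `ϑ_j, ϑ_k` are
obtained by cyclic permutation of the arguments. -/
noncomputable def hypAngle (Ii Ij Ik ri rj rk : ℝ) : ℝ :=
  Real.arccos ((hypCosh Ij rk ri * hypCosh Ik ri rj - hypCosh Ii rj rk) /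
    (Real.sqrt (hypCosh Ij rk ri ^ 2 - 1) * Real.sqrt (hypCosh Ik ri rj ^ 2 - 1)))

/-!
If `a, b, c > 1` are the hyperbolic cosines of the sides of a triangle, the law-of-cosines values
lie in `(-1, 1)` exactly when `1 + 2abc - a² - b² - c² > 0`, and then
`cos α + cos β cos γ = a · sin β sin γ > sin β sin γ`, i.e. `α < π - (β + γ)`: the angle sum of a
hyperbolic triangle is less than `π`.

For the three-circle triangle, `cosh l_j cosh l_k - cosh l_i` is compared with
`sinh l_j sinh l_k` through `sinh² l = (cosh x sinh y + I sinh x cosh y)² + (1 - I²) sinh² x`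
(and through `sinh l ≤ sinh (x + y)` when `I_i < 0`). The difference then expands into
nonnegative multiples of `ξ_i, ξ_j, ξ_k` plus a positive term, which gives
`-I_i < cos ϑ_i < 1`, i.e. `0 < ϑ_i < π - Θ_i`, and nondegeneracy of the triangle.
-/

open Real Set

-- `a b c` are hyperbolic cosines of the sides; this is the cosine of the angle opposite `a`.
noncomputable def coshLawCos (a b c : ℝ) : ℝ := (b * c - a) / (√(b ^ 2 - 1) * √(c ^ 2 - 1))

def coshGram (a b c : ℝ) : ℝ := 1 + 2 * a * b * c - a ^ 2 - b ^ 2 - c ^ 2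

section CoshLaw

variable {a b c : ℝ}

lemma coshGram_rotate (a b c : ℝ) : coshGram b c a = coshGram a b c := by
  unfold coshGram; ring

lemma coshGram_rotate_rotate (a b c : ℝ) : coshGram c a b = coshGram a b c :=
  (coshGram_rotate b c a).trans (coshGram_rotate a b c)

lemma one_sub_coshLawCos_sq (hb : 1 < b) (hc : 1 < c) :
    1 - coshLawCos a b c ^ 2 = coshGram a b c / ((b ^ 2 - 1) * (c ^ 2 - 1)) := by
  have hb' : 0 < b ^ 2 - 1 := by nlinarith
  have hc' : 0 < c ^ 2 - 1 := by nlinarith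
  rw [coshLawCos, div_pow, mul_pow, sq_sqrt hb'.le, sq_sqrt hc'.le, coshGram]
  field_simp
  ring

lemma abs_coshLawCos_lt_one_iff (hb : 1 < b) (hc : 1 < c) :
    |coshLawCos a b c| < 1 ↔ 0 < coshGram a b c := by
  have hbc : 0 < (b ^ 2 - 1) * (c ^ 2 - 1) := mul_pos (by nlinarith) (by nlinarith)
  rw [← sq_lt_one_iff_abs_lt_one, ← sub_pos, one_sub_coshLawCos_sq hb hc,
    div_pos_iff_of_pos_right hbc]

lemma coshLawCos_add_mul_coshLawCos (ha : 1 < a) (hb : 1 < b) (hc : 1 < c) :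
    coshLawCos a b c + coshLawCos b c a * coshLawCos c a b
      = a * coshGram a b c / ((a ^ 2 - 1) * (√(b ^ 2 - 1) * √(c ^ 2 - 1))) := by
  have ha' : 0 < √(a ^ 2 - 1) := sqrt_pos.mpr (by nlinarith)
  have hb' : 0 < √(b ^ 2 - 1) := sqrt_pos.mpr (by nlinarith)
  have hc' : 0 < √(c ^ 2 - 1) := sqrt_pos.mpr (by nlinarith)
  have ha2 : √(a ^ 2 - 1) ^ 2 = a ^ 2 - 1 := sq_sqrt (by nlinarith)
  rw [← ha2]
  unfold coshLawCos coshGram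
  field_simp
  linear_combination (b * c - a) * ha2

lemma sqrt_one_sub_coshLawCos_sq_mul (ha : 1 < a) (hb : 1 < b) (hc : 1 < c)
    (hD : 0 ≤ coshGram a b c) :
    √(1 - coshLawCos b c a ^ 2) * √(1 - coshLawCos c a b ^ 2)
      = coshGram a b c / ((a ^ 2 - 1) * (√(b ^ 2 - 1) * √(c ^ 2 - 1))) := by
  have ha' : 0 < a ^ 2 - 1 := by nlinarith
  have hb' : 0 < b ^ 2 - 1 := by nlinarith
  have hc' : 0 < c ^ 2 - 1 := by nlinarith
  rw [one_sub_coshLawCos_sq hc ha, one_sub_coshLawCos_sq ha hb, coshGram_rotate a b c,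
    coshGram_rotate_rotate a b c, ← sqrt_mul (div_nonneg hD (by positivity))]
  refine (sqrt_eq_iff_eq_sq (by positivity) (div_nonneg hD (by positivity))).mpr ?_
  rw [div_pow, mul_pow, mul_pow, sq_sqrt hb'.le, sq_sqrt hc'.le]
  field_simp

theorem arccos_coshLawCos_add_lt_pi (ha : 1 < a) (hb : 1 < b) (hc : 1 < c)
    (hD : 0 < coshGram a b c) :
    arccos (coshLawCos a b c) + arccos (coshLawCos b c a) + arccos (coshLawCos c a b) < π := by
  set tA := coshLawCos a b c
  set tB := coshLawCos b c a
  set tC := coshLawCos c a b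
  have hA : |tA| < 1 := (abs_coshLawCos_lt_one_iff hb hc).mpr hD
  have hB : |tB| < 1 := (abs_coshLawCos_lt_one_iff hc ha).mpr (by rwa [coshGram_rotate])
  have hC : |tC| < 1 := (abs_coshLawCos_lt_one_iff ha hb).mpr
    (by rwa [coshGram_rotate_rotate])
  obtain ⟨hA₁, hA₂⟩ := abs_lt.mp hA
  obtain ⟨hB₁, hB₂⟩ := abs_lt.mp hB
  obtain ⟨hC₁, hC₂⟩ := abs_lt.mp hC
  have ha' : 0 < √(a ^ 2 - 1) := sqrt_pos.mpr (by nlinarith)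
  have hb' : 0 < √(b ^ 2 - 1) := sqrt_pos.mpr (by nlinarith)
  have hc' : 0 < √(c ^ 2 - 1) := sqrt_pos.mpr (by nlinarith)
  have hBC : 0 < tB + tC := by
    have hBA : 0 < tB + tC * tA := by
      rw [coshLawCos_add_mul_coshLawCos hb hc ha, coshGram_rotate]
      exact div_pos (mul_pos (by linarith) hD) (mul_pos (by nlinarith) (mul_pos hc' ha'))
    have hCA : 0 < tC + tA * tB := by
      rw [coshLawCos_add_mul_coshLawCos hc ha hb, coshGram_rotate_rotate]
      exact div_pos (mul_pos (by linarith) hD) (mul_pos (by nlinarith) (mul_pos ha' hb'))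
    have : 0 < (1 + tA) * (tB + tC) := by linear_combination hBA + hCA
    exact pos_of_mul_pos_right this (by linarith)
  have hβγ : arccos tB + arccos tC < π := by
    have := arccos_lt_arccos (by linarith) (by linarith : -tC < tB) hB₂.le
    rw [arccos_neg] at this
    linarith
  have hcos : cos (π - (arccos tB + arccos tC)) < tA := by
    rw [cos_pi_sub, cos_add, cos_arccos hB₁.le hB₂.le, cos_arccos hC₁.le hC₂.le, sin_arccos,
      sin_arccos, sqrt_one_sub_coshLawCos_sq_mul ha hb hc hD.le]
    have hX : 0 < (a ^ 2 - 1) * (√(b ^ 2 - 1) * √(c ^ 2 - 1)) :=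
      mul_pos (by nlinarith) (mul_pos hb' hc')
    have : coshGram a b c / ((a ^ 2 - 1) * (√(b ^ 2 - 1) * √(c ^ 2 - 1)))
        < a * coshGram a b c / ((a ^ 2 - 1) * (√(b ^ 2 - 1) * √(c ^ 2 - 1))) :=
      (div_lt_div_iff_of_pos_right hX).mpr (lt_mul_of_one_lt_left hD ha)
    linarith [coshLawCos_add_mul_coshLawCos ha hb hc]
  have hα : arccos tA < π - (arccos tB + arccos tC) := by
    have := arccos_lt_arccos (neg_one_le_cos _) hcos hA₂.le
    rwa [arccos_cos (by linarith) (by linarith [arccos_nonneg tB, arccos_nonneg tC])] at this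
  linarith

end CoshLaw

lemma mul_mem_Ioc_neg_one_one {a b : ℝ} (ha : a ∈ Ioc (-1) 1) (hb : b ∈ Ioc (-1) 1) :
    a * b ∈ Ioc (-1) 1 := by
  obtain ⟨ha₀, ha₁⟩ := ha
  obtain ⟨hb₀, hb₁⟩ := hb
  constructor
  · nlinarith [mul_pos (neg_lt_iff_pos_add'.mp ha₀) (neg_lt_iff_pos_add'.mp hb₀),
      mul_nonneg (sub_nonneg.mpr ha₁) (sub_nonneg.mpr hb₁)]
  · nlinarith [mul_nonneg (neg_le_iff_add_nonneg'.mp ha₀.le) (sub_nonneg.mpr hb₁),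
      mul_nonneg (sub_nonneg.mpr ha₁) (neg_le_iff_add_nonneg'.mp hb₀.le)]

structure AdmissibleCosines (Ii Ij Ik : ℝ) : Prop where
  mem_i : Ii ∈ Ioc (-1) 1
  mem_j : Ij ∈ Ioc (-1) 1
  mem_k : Ik ∈ Ioc (-1) 1
  ξi_nonneg : 0 ≤ Ii + Ij * Ik
  ξj_nonneg : 0 ≤ Ij + Ik * Ii
  ξk_nonneg : 0 ≤ Ik + Ii * Ij

lemma AdmissibleCosines.rotate {Ii Ij Ik : ℝ} (h : AdmissibleCosines Ii Ij Ik) :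
    AdmissibleCosines Ij Ik Ii :=
  ⟨h.mem_j, h.mem_k, h.mem_i, h.ξj_nonneg, h.ξk_nonneg, h.ξi_nonneg⟩

section ThreeCircles

variable {I x y : ℝ}

lemma hypCosh_comm (I x y : ℝ) : hypCosh I x y = hypCosh I y x := by
  unfold hypCosh; ring

lemma one_lt_hypCosh (hI : -1 < I) (hx : 0 < x) (hy : 0 < y) : 1 < hypCosh I x y := by
  have hxy : 0 < sinh x * sinh y := mul_pos (sinh_pos_iff.mpr hx) (sinh_pos_iff.mpr hy)
  have h := one_le_cosh (x - y)
  rw [cosh_sub] at h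
  unfold hypCosh
  nlinarith

lemma sqrt_hypCosh_sq_sub_one_pos (hI : -1 < I) (hx : 0 < x) (hy : 0 < y) :
    0 < √(hypCosh I x y ^ 2 - 1) :=
  sqrt_pos.mpr (by nlinarith [one_lt_hypCosh hI hx hy])

lemma hypCosh_le_cosh_add (hI : I ≤ 1) (hx : 0 ≤ x) (hy : 0 ≤ y) :
    hypCosh I x y ≤ cosh (x + y) := by
  have hxy : 0 ≤ sinh x * sinh y := mul_nonneg (sinh_nonneg_iff.mpr hx) (sinh_nonneg_iff.mpr hy)
  rw [cosh_add]
  unfold hypCosh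
  nlinarith

lemma hypCosh_sq_sub_one (I x y : ℝ) :
    hypCosh I x y ^ 2 - 1 =
      (cosh x * sinh y + I * sinh x * cosh y) ^ 2 + (1 - I ^ 2) * sinh x ^ 2 := by
  unfold hypCosh
  linear_combination (cosh x ^ 2 - I ^ 2 * sinh x ^ 2) * cosh_sq y + cosh_sq x

lemma abs_le_sqrt_hypCosh_sq_sub_one (hI : I ^ 2 ≤ 1) :
    |cosh x * sinh y + I * sinh x * cosh y| ≤ √(hypCosh I x y ^ 2 - 1) := by
  rw [← sqrt_sq_eq_abs, hypCosh_sq_sub_one]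
  gcongr
  nlinarith [sq_nonneg (sinh x)]

lemma abs_lt_sqrt_hypCosh_sq_sub_one (hI : I ^ 2 < 1) (hx : 0 < x) :
    |cosh x * sinh y + I * sinh x * cosh y| < √(hypCosh I x y ^ 2 - 1) := by
  rw [← sqrt_sq_eq_abs, hypCosh_sq_sub_one]
  have : 0 < (1 - I ^ 2) * sinh x ^ 2 := mul_pos (by linarith) (pow_pos (sinh_pos_iff.mpr hx) 2)
  gcongr
  linarith

lemma sqrt_hypCosh_sq_sub_one_le_sinh_add (hI₀ : -1 < I) (hI₁ : I ≤ 1) (hx : 0 < x)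
    (hy : 0 < y) :
    √(hypCosh I x y ^ 2 - 1) ≤ sinh (x + y) := by
  have h₁ := one_lt_hypCosh hI₀ hx hy
  have h₂ := hypCosh_le_cosh_add hI₁ hx.le hy.le
  calc √(hypCosh I x y ^ 2 - 1) ≤ √(cosh (x + y) ^ 2 - 1) := by gcongr
    _ = sinh (x + y) := by rw [cosh_sq, add_sub_cancel_right, sqrt_sq (by positivity)]

end ThreeCircles

namespace AdmissibleCosines

variable {Ii Ij Ik ri rj rk : ℝ}

lemma neg_le_of_neg (h : AdmissibleCosines Ii Ij Ik) (hIi : Ii < 0) :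
    -Ii ≤ Ij ∧ -Ii ≤ Ik := by
  have hjk : 0 < Ij * Ik := by linarith [h.ξi_nonneg]
  obtain ⟨hj, hk⟩ | ⟨hj, hk⟩ := pos_and_pos_or_neg_and_neg_of_mul_pos hjk
  · constructor <;> nlinarith [h.ξi_nonneg, h.mem_j.2, h.mem_k.2]
  · -- `-Ij ≤ Ik Ii ≤ -Ij Ik² < -Ij` by `ξj`, then `ξi` scaled by `-Ik`
    nlinarith [h.ξj_nonneg, mul_le_mul_of_nonneg_left h.ξi_nonneg (by linarith : 0 ≤ -Ik),
      mul_pos (neg_pos.mpr hj) (by nlinarith [h.mem_k.1] : 0 < 1 - Ik ^ 2)]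

theorem coshLawCos_lt_one (h : AdmissibleCosines Ii Ij Ik) (hri : 0 < ri) (hrj : 0 < rj)
    (hrk : 0 < rk) :
    coshLawCos (hypCosh Ii rj rk) (hypCosh Ij rk ri) (hypCosh Ik ri rj) < 1 := by
  set b' := √(hypCosh Ij rk ri ^ 2 - 1)
  set c' := √(hypCosh Ik ri rj ^ 2 - 1)
  have hb' : 0 < b' := sqrt_hypCosh_sq_sub_one_pos h.mem_j.1 hrk hri
  have hc' : 0 < c' := sqrt_hypCosh_sq_sub_one_pos h.mem_k.1 hri hrj
  set u := cosh rk * sinh ri + Ij * sinh rk * cosh ri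
  set v := cosh rj * sinh ri + Ik * sinh rj * cosh ri
  have hu : |u| ≤ b' := abs_le_sqrt_hypCosh_sq_sub_one (by nlinarith [h.mem_j.1, h.mem_j.2])
  have hv : |v| ≤ c' := by
    rw [show c' = √(hypCosh Ik rj ri ^ 2 - 1) by rw [hypCosh_comm]]
    exact abs_le_sqrt_hypCosh_sq_sub_one (by nlinarith [h.mem_k.1, h.mem_k.2])
  have key : hypCosh Ij rk ri * hypCosh Ik ri rj - hypCosh Ii rj rk
      = u * v - (Ii + Ij * Ik) * (sinh rj * sinh rk) := by
    unfold hypCosh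
    linear_combination (cosh rj * cosh rk - Ij * Ik * (sinh rj * sinh rk)) * cosh_sq ri
  have hsjk : 0 < sinh rj * sinh rk := mul_pos (sinh_pos_iff.mpr hrj) (sinh_pos_iff.mpr hrk)
  have huv : u * v ≤ |u| * |v| := by rw [← abs_mul]; exact le_abs_self _
  have hstrict : u * v < b' * c' ∨ 0 < Ii + Ij * Ik := by
    rcases h.mem_j.2.lt_or_eq with hj | hj
    · have := abs_lt_sqrt_hypCosh_sq_sub_one (by nlinarith [h.mem_j.1]) hrk (I := Ij) (y := ri)
      left; nlinarith [abs_nonneg u, abs_nonneg v]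
    rcases h.mem_k.2.lt_or_eq with hk | hk
    · have := abs_lt_sqrt_hypCosh_sq_sub_one (by nlinarith [h.mem_k.1]) hrj (I := Ik) (y := ri)
      rw [hypCosh_comm] at this
      left; nlinarith [abs_nonneg u, abs_nonneg v]
    · right; rw [hj, hk]; linarith [h.mem_i.1]
  rw [coshLawCos, div_lt_one (mul_pos hb' hc'), key]
  rcases hstrict with hs | hs
  · nlinarith [mul_nonneg h.ξi_nonneg hsjk.le, abs_nonneg u, abs_nonneg v]
  · nlinarith [mul_pos hs hsjk, abs_nonneg u, abs_nonneg v]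
lemma neg_lt_coshLawCos_of_nonneg (h : AdmissibleCosines Ii Ij Ik) (hIi : 0 ≤ Ii)
    (hri : 0 < ri) (hrj : 0 < rj) (hrk : 0 < rk) :
    -Ii < coshLawCos (hypCosh Ii rj rk) (hypCosh Ij rk ri) (hypCosh Ik ri rj) := by
  set b' := √(hypCosh Ij rk ri ^ 2 - 1)
  set c' := √(hypCosh Ik ri rj ^ 2 - 1)
  have hb' : 0 < b' := sqrt_hypCosh_sq_sub_one_pos h.mem_j.1 hrk hri
  have hc' : 0 < c' := sqrt_hypCosh_sq_sub_one_pos h.mem_k.1 hri hrj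
  set u := cosh ri * sinh rk + Ij * sinh ri * cosh rk
  set v := cosh ri * sinh rj + Ik * sinh ri * cosh rj
  have hu : |u| ≤ b' := by
    rw [show b' = √(hypCosh Ij ri rk ^ 2 - 1) by rw [hypCosh_comm]]
    exact abs_le_sqrt_hypCosh_sq_sub_one (by nlinarith [h.mem_j.1, h.mem_j.2])
  have hv : |v| ≤ c' := abs_le_sqrt_hypCosh_sq_sub_one (by nlinarith [h.mem_k.1, h.mem_k.2])
  have huv : u * v ≤ b' * c' := (le_abs_self _).trans (abs_mul u v ▸ by gcongr)
  have key : hypCosh Ij rk ri * hypCosh Ik ri rj - hypCosh Ii rj rk + Ii * (u * v)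
      = (1 + Ii * Ij * Ik) * (sinh ri ^ 2 * (cosh rj * cosh rk))
        + (Ik + Ii * Ij) * (cosh ri * cosh rk * sinh ri * sinh rj)
        + (Ij + Ik * Ii) * (cosh ri * cosh rj * sinh ri * sinh rk)
        + (Ii + Ij * Ik) * (sinh ri ^ 2 * (sinh rj * sinh rk)) := by
    unfold hypCosh
    linear_combination (cosh rj * cosh rk + Ii * sinh rj * sinh rk) * cosh_sq ri
  have hsi := sinh_pos_iff.mpr hri
  have hsj := sinh_pos_iff.mpr hrj
  have hsk := sinh_pos_iff.mpr hrk
  have htriple : 0 < 1 + Ii * Ij * Ik := by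
    have := (mul_mem_Ioc_neg_one_one h.mem_i
      (mul_mem_Ioc_neg_one_one h.mem_j h.mem_k)).1
    linarith [mul_assoc Ii Ij Ik]
  have : 0 < (1 + Ii * Ij * Ik) * (sinh ri ^ 2 * (cosh rj * cosh rk)) := by positivity
  have : 0 ≤ (Ik + Ii * Ij) * (cosh ri * cosh rk * sinh ri * sinh rj) :=
    mul_nonneg h.ξk_nonneg (by positivity)
  have : 0 ≤ (Ij + Ik * Ii) * (cosh ri * cosh rj * sinh ri * sinh rk) :=
    mul_nonneg h.ξj_nonneg (by positivity)
  have : 0 ≤ (Ii + Ij * Ik) * (sinh ri ^ 2 * (sinh rj * sinh rk)) :=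
    mul_nonneg h.ξi_nonneg (by positivity)
  rw [coshLawCos, lt_div_iff₀ (mul_pos hb' hc')]
  nlinarith [mul_le_mul_of_nonneg_left huv hIi]

lemma neg_lt_coshLawCos_of_neg (h : AdmissibleCosines Ii Ij Ik) (hIi : Ii < 0)
    (hri : 0 < ri) (hrj : 0 < rj) (hrk : 0 < rk) :
    -Ii < coshLawCos (hypCosh Ii rj rk) (hypCosh Ij rk ri) (hypCosh Ik ri rj) := by
  set b' := √(hypCosh Ij rk ri ^ 2 - 1)
  set c' := √(hypCosh Ik ri rj ^ 2 - 1)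
  have hb' : 0 < b' := sqrt_hypCosh_sq_sub_one_pos h.mem_j.1 hrk hri
  have hc' : 0 < c' := sqrt_hypCosh_sq_sub_one_pos h.mem_k.1 hri hrj
  have hbc : b' * c' ≤ sinh (rk + ri) * sinh (ri + rj) :=
    mul_le_mul (sqrt_hypCosh_sq_sub_one_le_sinh_add h.mem_j.1 h.mem_j.2 hrk hri)
      (sqrt_hypCosh_sq_sub_one_le_sinh_add h.mem_k.1 h.mem_k.2 hri hrj) hc'.le
      (sinh_pos_iff.mpr (by linarith)).le
  have key : hypCosh Ij rk ri * hypCosh Ik ri rj - hypCosh Ii rj rk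
        + Ii * (sinh (rk + ri) * sinh (ri + rj))
      = (1 + Ii) * (sinh ri ^ 2 * (cosh rj * cosh rk))
        + (Ik + Ii) * (cosh ri * cosh rk * sinh ri * sinh rj)
        + (Ij + Ii) * (cosh ri * cosh rj * sinh ri * sinh rk)
        + (Ii + Ij * Ik) * (sinh ri ^ 2 * (sinh rj * sinh rk)) := by
    unfold hypCosh
    rw [sinh_add, sinh_add]
    linear_combination (cosh rj * cosh rk + Ii * sinh rj * sinh rk) * cosh_sq ri
  obtain ⟨hj, hk⟩ := h.neg_le_of_neg hIi
  have hsi := sinh_pos_iff.mpr hri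
  have hsj := sinh_pos_iff.mpr hrj
  have hsk := sinh_pos_iff.mpr hrk
  have : 0 < (1 + Ii) * (sinh ri ^ 2 * (cosh rj * cosh rk)) :=
    mul_pos (by linarith [h.mem_i.1]) (by positivity)
  have : 0 ≤ (Ik + Ii) * (cosh ri * cosh rk * sinh ri * sinh rj) :=
    mul_nonneg (by linarith) (by positivity)
  have : 0 ≤ (Ij + Ii) * (cosh ri * cosh rj * sinh ri * sinh rk) :=
    mul_nonneg (by linarith) (by positivity)
  have : 0 ≤ (Ii + Ij * Ik) * (sinh ri ^ 2 * (sinh rj * sinh rk)) :=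
    mul_nonneg h.ξi_nonneg (by positivity)
  rw [coshLawCos, lt_div_iff₀ (mul_pos hb' hc')]
  nlinarith [mul_le_mul_of_nonpos_left hbc hIi.le]

theorem neg_lt_coshLawCos (h : AdmissibleCosines Ii Ij Ik)
    (hri : 0 < ri) (hrj : 0 < rj) (hrk : 0 < rk) :
    -Ii < coshLawCos (hypCosh Ii rj rk) (hypCosh Ij rk ri) (hypCosh Ik ri rj) := by
  rcases le_or_gt 0 Ii with hIi | hIi
  · exact h.neg_lt_coshLawCos_of_nonneg hIi hri hrj hrk
  · exact h.neg_lt_coshLawCos_of_neg hIi hri hrj hrk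

theorem hypAngle_pos (h : AdmissibleCosines Ii Ij Ik) (hri : 0 < ri) (hrj : 0 < rj)
    (hrk : 0 < rk) : 0 < hypAngle Ii Ij Ik ri rj rk :=
  arccos_pos.mpr (h.coshLawCos_lt_one hri hrj hrk)

theorem hypAngle_lt_pi_sub {Θ : ℝ} (h : AdmissibleCosines (cos Θ) Ij Ik) (hΘ₀ : 0 ≤ Θ)
    (hΘ₁ : Θ ≤ π) (hri : 0 < ri) (hrj : 0 < rj) (hrk : 0 < rk) :
    hypAngle (cos Θ) Ij Ik ri rj rk < π - Θ :=
  calc hypAngle (cos Θ) Ij Ik ri rj rk < arccos (-cos Θ) :=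
        arccos_lt_arccos (by linarith [h.mem_i.2]) (h.neg_lt_coshLawCos hri hrj hrk)
          (h.coshLawCos_lt_one hri hrj hrk).le
    _ = π - Θ := by rw [arccos_neg, arccos_cos hΘ₀ hΘ₁]

theorem hypAngle_add_add_lt_pi (h : AdmissibleCosines Ii Ij Ik) (hri : 0 < ri) (hrj : 0 < rj)
    (hrk : 0 < rk) :
    hypAngle Ii Ij Ik ri rj rk + hypAngle Ij Ik Ii rj rk ri + hypAngle Ik Ii Ij rk ri rj
      < π := by
  have hA := one_lt_hypCosh h.mem_i.1 hrj hrk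
  have hB := one_lt_hypCosh h.mem_j.1 hrk hri
  have hC := one_lt_hypCosh h.mem_k.1 hri hrj
  have hgram := (abs_coshLawCos_lt_one_iff hB hC).mp <| abs_lt.mpr
    ⟨by linarith [h.neg_lt_coshLawCos hri hrj hrk, h.mem_i.2], h.coshLawCos_lt_one hri hrj hrk⟩
  exact arccos_coshLawCos_add_lt_pi hA hB hC hgram

end AdmissibleCosines

lemma neg_one_lt_cos_of_nonneg_of_lt_pi {θ : ℝ} (h₀ : 0 ≤ θ) (h₁ : θ < π) : -1 < cos θ := by
  simpa using cos_lt_cos_of_nonneg_of_le_pi h₀ le_rfl h₁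

theorem stmt_10 (Θi Θj Θk : ℝ)
    (hi0 : 0 ≤ Θi) (hi1 : Θi < Real.pi)
    (hj0 : 0 ≤ Θj) (hj1 : Θj < Real.pi)
    (hk0 : 0 ≤ Θk) (hk1 : Θk < Real.pi)
    (hξi : 0 ≤ Real.cos Θi + Real.cos Θj * Real.cos Θk)
    (hξj : 0 ≤ Real.cos Θj + Real.cos Θk * Real.cos Θi)
    (hξk : 0 ≤ Real.cos Θk + Real.cos Θi * Real.cos Θj)
    (ri rj rk : ℝ) (hri : 0 < ri) (hrj : 0 < rj) (hrk : 0 < rk) :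
    (0 < hypAngle (Real.cos Θi) (Real.cos Θj) (Real.cos Θk) ri rj rk ∧
      hypAngle (Real.cos Θi) (Real.cos Θj) (Real.cos Θk) ri rj rk < Real.pi - Θi) ∧
    (0 < hypAngle (Real.cos Θj) (Real.cos Θk) (Real.cos Θi) rj rk ri ∧
      hypAngle (Real.cos Θj) (Real.cos Θk) (Real.cos Θi) rj rk ri < Real.pi - Θj) ∧
    (0 < hypAngle (Real.cos Θk) (Real.cos Θi) (Real.cos Θj) rk ri rj ∧
      hypAngle (Real.cos Θk) (Real.cos Θi) (Real.cos Θj) rk ri rj < Real.pi - Θk) ∧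
    hypAngle (Real.cos Θi) (Real.cos Θj) (Real.cos Θk) ri rj rk
      + hypAngle (Real.cos Θj) (Real.cos Θk) (Real.cos Θi) rj rk ri
      + hypAngle (Real.cos Θk) (Real.cos Θi) (Real.cos Θj) rk ri rj < Real.pi := by
  have h : AdmissibleCosines (cos Θi) (cos Θj) (cos Θk) :=
    ⟨⟨neg_one_lt_cos_of_nonneg_of_lt_pi hi0 hi1, cos_le_one _⟩,
      ⟨neg_one_lt_cos_of_nonneg_of_lt_pi hj0 hj1, cos_le_one _⟩,
      ⟨neg_one_lt_cos_of_nonneg_of_lt_pi hk0 hk1, cos_le_one _⟩, hξi, hξj, hξk⟩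
  exact ⟨⟨h.hypAngle_pos hri hrj hrk, h.hypAngle_lt_pi_sub hi0 hi1.le hri hrj hrk⟩,
    ⟨h.rotate.hypAngle_pos hrj hrk hri, h.rotate.hypAngle_lt_pi_sub hj0 hj1.le hrj hrk hri⟩,
    ⟨h.rotate.rotate.hypAngle_pos hrk hri hrj,
      h.rotate.rotate.hypAngle_lt_pi_sub hk0 hk1.le hrk hri hrj⟩,
    h.hypAngle_add_add_lt_pi hri hrj hrk⟩
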